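/- arXiv:2206.06151 — 4 statements merged into one kernel-verified Lean document; each statement's English description precedes it below -/
import Mathlib

section
/- With the notation of partial elimination ideals, for each i ≥ 1 there is a short exact sequence of graded R-modules 0 → K̃_{i-1}(I) → K̃_i(I) → K_i(I)(-i) → 0, where the surjection sends f ∈ K̃_i(I) to its coefficient of x_0^i. -/
open MvPolynomial Polynomial

/-- The submodule `K̃_i(J)` of elements of `J` of `x₀`-degree at most `i`,
as a graded `R`-module (here `S = R[x₀]` is realized as `Polynomial R`). -/
noncomputable def Ktilde {k : Type} [Field k] {σ : Type}
    (J : Ideal (Polynomial (MvPolynomial σ k))) (i : ℕ) :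
    Submodule (MvPolynomial σ k) (Polynomial (MvPolynomial σ k)) :=
  (Submodule.restrictScalars (MvPolynomial σ k) J) ⊓ Polynomial.degreeLE _ (i : ℕ)

/-- The `i`-th partial elimination ideal `K_i(J) ⊆ R`: the ideal of
coefficients of `x₀^i` of elements of `K̃_i(J)`. -/
noncomputable def pei {k : Type} [Field k] {σ : Type}
    (J : Ideal (Polynomial (MvPolynomial σ k))) (i : ℕ) :
    Submodule (MvPolynomial σ k) (MvPolynomial σ k) :=
  Submodule.map (Polynomial.lcoeff _ i) (Ktilde J i)

/-- For each `i ≥ 1` there is a short exact sequence of graded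
`R`-modules `0 → K̃_{i-1}(I) → K̃_i(I) → K_i(I)(-i) → 0`, where the inclusion is
the canonical one and the surjection sends `f` to its coefficient of `x₀^i`.
(The twist `(-i)` only affects the grading; the sequence of underlying
`R`-modules is formalized by injectivity, surjectivity onto `K_i(I)`, and the
identification of the kernel of the coefficient map with `K̃_{i-1}(I)`.)
Here `I` is a homogeneous ideal of `S = k[x₀,…,x_r] = MvPolynomial (Option σ) k`
transported to `Polynomial R` via `optionEquivLeft`. -/
theorem partialElimination_ses
    {k : Type} [Field k] {σ : Type}
    (I : Ideal (MvPolynomial (Option σ) k))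
    (hI : ∀ f ∈ I, ∀ n, homogeneousComponent n f ∈ I)
    (J : Ideal (Polynomial (MvPolynomial σ k)))
    (hJ : J = Ideal.map ((optionEquivLeft k σ).toAlgHom.toRingHom) I)
    (i : ℕ) (hi : 1 ≤ i) :
    ∃ hle : Ktilde J (i - 1) ≤ Ktilde J i,
      Function.Injective (Submodule.inclusion hle) ∧
      (∀ g, g ∈ pei J i ↔ ∃ p : Ktilde J i, Polynomial.lcoeff _ i (p : Polynomial (MvPolynomial σ k)) = g) ∧
      (∀ p : Ktilde J i, Polynomial.lcoeff _ i (p : Polynomial (MvPolynomial σ k)) = 0 ↔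
        ∃ q : Ktilde J (i - 1), Submodule.inclusion hle q = p) := by

  have hle : Ktilde J (i - 1) ≤ Ktilde J i := by
    rintro p ⟨hpJ, hpd⟩
    refine ⟨hpJ, Polynomial.mem_degreeLE.mpr ?_⟩
    exact le_trans (Polynomial.mem_degreeLE.mp hpd) (by exact_mod_cast Nat.sub_le i 1)
  refine ⟨hle, Submodule.inclusion_injective hle, ?_, ?_⟩
  · intro g
    constructor
    · rintro ⟨p, hp, rfl⟩
      exact ⟨⟨p, hp⟩, rfl⟩
    · rintro ⟨⟨p, hp⟩, rfl⟩
      exact ⟨p, hp, rfl⟩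
  · rintro ⟨p, hpJ, hpd⟩
    simp only [Polynomial.lcoeff_apply]
    constructor
    · intro h0
      have hd : p.degree ≤ ((i - 1 : ℕ) : WithBot ℕ) := by
        rw [Polynomial.degree_le_iff_coeff_zero]
        intro m hm
        have hm' : i - 1 < m := by exact_mod_cast hm
        rcases lt_or_ge i m with hlt | hle'
        · have := Polynomial.mem_degreeLE.mp hpd
          rw [Polynomial.degree_le_iff_coeff_zero] at this
          exact this m (by exact_mod_cast hlt)
        · have : m = i := le_antisymm hle' (by omega)
          simpa [this] using h0
      exact ⟨⟨p, hpJ, Polynomial.mem_degreeLE.mpr hd⟩, rfl⟩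
    · rintro ⟨⟨q, hqJ, hqd⟩, hq⟩
      have hpq : q = p := congrArg Subtype.val hq
      subst hpq
      have := Polynomial.mem_degreeLE.mp hqd
      rw [Polynomial.degree_le_iff_coeff_zero] at this
      exact this i (by exact_mod_cast (by omega : i - 1 < i))
end

section
/- (Caviglia) For every integer d ≥ 2, the ideal I_d = (z_2^{d-1} y_1 − y_2^{d-1} z_1,\ y_1^d,\ z_1^d) in k[y_1, z_1, y_2, z_2] satisfies reg I_d ≥ d^2 − 1. -/
set_option synthInstance.maxHeartbeats 1000000
set_option maxHeartbeats 1000000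

open MvPolynomial
open scoped Classical

/-- A graded free resolution of a graded module `M` over `S = k[x_i : i ∈ σ]`,
with `i`-th term the free module `⨁_{b : ι i} S(-twist i b)` (realized as
`ι i → S` with generators `e_b` of degree `twist i b`).  The grading of `M`
is recorded by the family `gr : ℤ → Submodule k M` of its graded pieces.
Homogeneity of the differentials is expressed entrywise: the `(y,b)`-entry of
`d i` is homogeneous of degree `twist (i+1) b - twist i y` (and vanishes if
this is negative), and `aug e_b` lies in the degree-`twist 0 b` piece of `M`. -/
structure GradedFreeRes (k : Type) [Field k] (σ : Type)
    (M : Type) [AddCommGroup M] [Module (MvPolynomial σ k) M]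
    [Module k M] [IsScalarTower k (MvPolynomial σ k) M]
    (gr : ℤ → Submodule k M) where
  ι : ℕ → Type
  fin : ∀ i, Fintype (ι i)
  twist : ∀ i, ι i → ℤ
  aug : (ι 0 → MvPolynomial σ k) →ₗ[MvPolynomial σ k] M
  d : ∀ i, (ι (i + 1) → MvPolynomial σ k) →ₗ[MvPolynomial σ k] (ι i → MvPolynomial σ k)
  aug_surj : Function.Surjective aug
  exact_aug : LinearMap.ker aug = LinearMap.range (d 0)
  exact_d : ∀ i, LinearMap.ker (d i) = LinearMap.range (d (i + 1))
  aug_homog : ∀ b : ι 0,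
    aug (fun b' => if b' = b then 1 else 0) ∈ gr (twist 0 b)
  d_homog : ∀ i (b : ι (i + 1)) (y : ι i),
    (d i (fun b' => if b' = b then 1 else 0) y).IsHomogeneous
      ((twist (i + 1) b - twist i y).toNat) ∧
    (twist (i + 1) b - twist i y < 0 →
      d i (fun b' => if b' = b then 1 else 0) y = 0)

/-- `M` has Castelnuovo–Mumford regularity at most `r`:
some graded free resolution of `M` has all its `i`-th twists `≤ r + i`.
(For a finitely generated graded module this holds iff `reg M ≤ r`, since the
minimal free resolution realizes the bound and embeds in any resolution.) -/
def HasRegBound (k : Type) [Field k] (σ : Type)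
    (M : Type) [AddCommGroup M] [Module (MvPolynomial σ k) M]
    [Module k M] [IsScalarTower k (MvPolynomial σ k) M]
    (gr : ℤ → Submodule k M) (r : ℤ) : Prop :=
  ∃ F : GradedFreeRes k σ M gr, ∀ (i : ℕ) (b : F.ι i), F.twist i b ≤ r + i

/-- `M` has projective dimension at most `p`: some graded free resolution of
`M` vanishes in homological degrees `> p`. -/
def HasPdBound (k : Type) [Field k] (σ : Type)
    (M : Type) [AddCommGroup M] [Module (MvPolynomial σ k) M]
    [Module k M] [IsScalarTower k (MvPolynomial σ k) M]
    (gr : ℤ → Submodule k M) (p : ℕ) : Prop :=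
  ∃ F : GradedFreeRes k σ M gr, ∀ i : ℕ, p < i → IsEmpty (F.ι i)

/-- The grading on (the underlying module of) a homogeneous ideal `I ⊆ S`. -/
noncomputable def grIdeal {k : Type} [Field k] {σ : Type}
    (I : Ideal (MvPolynomial σ k)) (j : ℤ) : Submodule k ↥I :=
  if j < 0 then ⊥ else
    Submodule.span k {x : ↥I | (x : MvPolynomial σ k).IsHomogeneous j.toNat}

/-- The quotient grading on `S/I` for a homogeneous ideal `I ⊆ S`. -/
noncomputable def grQuot {k : Type} [Field k] {σ : Type}
    (I : Ideal (MvPolynomial σ k)) (j : ℤ) :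
    Submodule k (MvPolynomial σ k ⧸ I) :=
  if j < 0 then ⊥ else
    Submodule.span k {x : MvPolynomial σ k ⧸ I |
      ∃ u : MvPolynomial σ k, u.IsHomogeneous j.toNat ∧ Ideal.Quotient.mk I u = x}


/-!
The monomial `u = y₁ z₁^(d-1) y₂^(d²-2d) z₂^(d-2)` of degree `d² - 2` lies outside `I_d`, while
`𝔪 u ⊆ I_d`: the binomial generator trades `z₁ y₂^(d-1)` for `y₁ z₂^(d-1)`. Such a socle element
of `S/I_d` gives `Tor₃(I_d, k) ≠ 0` in degree `d² + 2`, hence `reg I_d ≥ d² - 1`.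

The `Tor` computation is a diagram chase between a graded free resolution `F` of `I_d` and the
Koszul complex of the variables. Lifting the Koszul cocycle `(X t * u)_t` through `F₀, F₁, F₂, F₃`
produces an element of `F₃` of degree `d² + 2`. If all generators of `F₃` had smaller degree, this
element would lie in `𝔪 F₃`, and exactness of the Koszul complex on the free modules `F₂, F₁, F₀`
would walk the staircase back down and put `u` into `I_d`.
-/

section Substitution

variable {R σ ι : Type*} [CommRing R]

local notation "𝕊" => MvPolynomial σ R

lemma X_smul_left_cancel {t : σ} {v w : ι → 𝕊}
    (h : (X t : 𝕊) • v = (X t : 𝕊) • w) : v = w :=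
  funext fun b => by simpa using congrFun h b

variable [DecidableEq σ]

noncomputable def killVar (t : σ) : 𝕊 →ₐ[R] 𝕊 :=
  aeval (Function.update X t 0)

@[simp] lemma killVar_X_self (t : σ) : killVar (R := R) t (X t) = 0 := by
  simp [killVar]

@[simp] lemma killVar_X_of_ne {s t : σ} (h : s ≠ t) : killVar (R := R) t (X s) = X s := by
  simp [killVar, h]

lemma X_dvd_sub_killVar (t : σ) (p : 𝕊) : X t ∣ p - killVar t p := by
  let π := Ideal.Quotient.mkₐ R (Ideal.span {(X t : 𝕊)})
  have hπ : π.comp (killVar t) = π := by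
    refine algHom_ext fun s => ?_
    rcases eq_or_ne s t with rfl | hst
    · simp [π]
    · simp [hst]
  rw [← Ideal.mem_span_singleton, ← Ideal.Quotient.eq, ← Ideal.Quotient.mkₐ_eq_mk R]
  exact (AlgHom.congr_fun hπ p).symm

lemma killVar_compLeft_smul (t : σ) (p : 𝕊) (v : ι → 𝕊) :
    (killVar t).compLeft ι (p • v) = killVar t p • (killVar t).compLeft ι v := by
  ext b
  simp

lemma exists_eq_killVar_compLeft_add_X_smul (t : σ) (v : ι → 𝕊) :
    ∃ w, v = (killVar t).compLeft ι v + (X t : 𝕊) • w := by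
  choose w hw using fun b => X_dvd_sub_killVar t (v b)
  exact ⟨w, funext fun b => by simp [← hw b]⟩

lemma exists_eq_X_smul_of_X_smul_eq {p q : σ} (hpq : p ≠ q) {x y : ι → 𝕊}
    (h : (X p : 𝕊) • y = (X q : 𝕊) • x) : ∃ w, x = (X p : 𝕊) • w := by
  have hx : (killVar p).compLeft ι x = 0 := by
    have := congrArg ((killVar p).compLeft ι) h
    rw [killVar_compLeft_smul, killVar_compLeft_smul, killVar_X_self,
      killVar_X_of_ne hpq.symm, zero_smul] at this
    exact X_smul_left_cancel (t := q) (by rw [← this, smul_zero])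
  obtain ⟨w, hw⟩ := exists_eq_killVar_compLeft_add_X_smul p x
  exact ⟨w, by rwa [hx, zero_add] at hw⟩

lemma exists_eq_X_smul_of_forall_X_smul_eq {p q : σ} (hpq : p ≠ q)
    {c : σ → ι → 𝕊} (h : ∀ t, (X p : 𝕊) • c t = (X t : 𝕊) • c p) :
    ∃ w, ∀ t, c t = (X t : 𝕊) • w := by
  obtain ⟨w, hw⟩ := exists_eq_X_smul_of_X_smul_eq hpq (h q)
  exact ⟨w, fun t => X_smul_left_cancel (t := p) (by rw [h t, hw, smul_comm])⟩

lemma exists_eq_cross_of_X_smul_add_eq_zero {p q r : σ} (hpq : p ≠ q) (hpr : p ≠ r)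
    (hqr : q ≠ r) {x y z : ι → 𝕊}
    (h : (X p : 𝕊) • x + (X q : 𝕊) • y + (X r : 𝕊) • z = 0) :
    ∃ α β γ, x = (X q : 𝕊) • γ - (X r : 𝕊) • β ∧ y = (X r : 𝕊) • α - (X p : 𝕊) • γ ∧
      z = (X p : 𝕊) • β - (X q : 𝕊) • α := by
  set κ := (killVar (R := R) r).compLeft ι
  have hκ : (X q : 𝕊) • -κ y = (X p : 𝕊) • κ x := by
    have := congrArg κ h
    simp only [κ, map_add, killVar_compLeft_smul, killVar_X_self, killVar_X_of_ne hpr,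
      killVar_X_of_ne hqr, zero_smul, add_zero, map_zero] at this
    rw [smul_neg, eq_comm, ← add_eq_zero_iff_eq_neg, this]
  obtain ⟨γ, hxγ⟩ := exists_eq_X_smul_of_X_smul_eq hpq.symm hκ
  have hyγ : κ y = -((X p : 𝕊) • γ) := by
    refine neg_eq_iff_eq_neg.mp (X_smul_left_cancel (t := q) ?_)
    rw [hκ, hxγ, smul_comm]
  obtain ⟨x', hx'⟩ := exists_eq_killVar_compLeft_add_X_smul r x
  obtain ⟨y', hy'⟩ := exists_eq_killVar_compLeft_add_X_smul r y
  have hz : z = -((X p : 𝕊) • x') - (X q : 𝕊) • y' := by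
    refine X_smul_left_cancel (t := r) ?_
    rw [hx', hy', hxγ, hyγ] at h
    linear_combination (norm := module) h
  refine ⟨y', -x', γ, ?_, ?_, ?_⟩
  · rw [hx', hxγ]; module
  · rw [hy', hyγ]; module
  · rw [hz]; module

end Substitution

section KoszulDifferentials

variable {R σ M N : Type*} [CommRing R] [AddCommGroup M] [AddCommGroup N]

section General

variable [Module (MvPolynomial σ R) M] [Module (MvPolynomial σ R) N]

local notation "𝕊" => MvPolynomial σ R

variable (R) in
noncomputable def koszulDiff₁ : (σ → M) →ₗ[𝕊] σ → σ → M where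
  toFun a s t := (X s : 𝕊) • a t - (X t : 𝕊) • a s
  map_add' a a' := by ext s t; simp only [Pi.add_apply, smul_add]; abel
  map_smul' c a := by ext s t; simp only [Pi.smul_apply, RingHom.id_apply, smul_sub, smul_comm c]

lemma koszulDiff₁_apply (a : σ → M) (s t : σ) :
    koszulDiff₁ R a s t = (X s : 𝕊) • a t - (X t : 𝕊) • a s := rfl

lemma map_koszulDiff₁ (f : M →ₗ[𝕊] N) (a : σ → M) (s t : σ) :
    f (koszulDiff₁ R a s t) = koszulDiff₁ R (f ∘ a) s t := by
  simp [koszulDiff₁_apply]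

end General

variable [Module (MvPolynomial (Fin 4) R) M] [Module (MvPolynomial (Fin 4) R) N]

local notation "𝕊" => MvPolynomial (Fin 4) R

variable (R) in
/-- Level two of the Koszul cochain complex of `X 0, …, X 3` is indexed by the variable missing
from the triple; only the entries `b s t` with `s < t` enter. -/
noncomputable def koszulDiff₂ : (Fin 4 → Fin 4 → M) →ₗ[𝕊] Fin 4 → M where
  toFun b := ![(X 1 : 𝕊) • b 2 3 - (X 2 : 𝕊) • b 1 3 + (X 3 : 𝕊) • b 1 2,
    (X 0 : 𝕊) • b 2 3 - (X 2 : 𝕊) • b 0 3 + (X 3 : 𝕊) • b 0 2,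
    (X 0 : 𝕊) • b 1 3 - (X 1 : 𝕊) • b 0 3 + (X 3 : 𝕊) • b 0 1,
    (X 0 : 𝕊) • b 1 2 - (X 1 : 𝕊) • b 0 2 + (X 2 : 𝕊) • b 0 1]
  map_add' b b' := by ext w; fin_cases w <;> simp <;> module
  map_smul' c b := by ext w; fin_cases w <;> simp <;> module

variable (R) in
noncomputable def koszulDiff₃ : (Fin 4 → M) →ₗ[𝕊] M where
  toFun c := (X 0 : 𝕊) • c 0 - (X 1 : 𝕊) • c 1 + (X 2 : 𝕊) • c 2 - (X 3 : 𝕊) • c 3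
  map_add' c c' := by simp only [Pi.add_apply]; module
  map_smul' r c := by simp only [Pi.smul_apply, RingHom.id_apply]; module

lemma koszulDiff₂_koszulDiff₁ (a : Fin 4 → M) : koszulDiff₂ R (koszulDiff₁ R a) = 0 := by
  ext w; fin_cases w <;> simp [koszulDiff₂, koszulDiff₁_apply] <;> module

lemma koszulDiff₃_koszulDiff₂ (b : Fin 4 → Fin 4 → M) : koszulDiff₃ R (koszulDiff₂ R b) = 0 := by
  simp [koszulDiff₃, koszulDiff₂]; module

lemma map_koszulDiff₂ (f : M →ₗ[𝕊] N) (b : Fin 4 → Fin 4 → M) (w : Fin 4) :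
    f (koszulDiff₂ R b w) = koszulDiff₂ R (fun s t => f (b s t)) w := by
  fin_cases w <;> simp [koszulDiff₂]

lemma map_koszulDiff₃ (f : M →ₗ[𝕊] N) (c : Fin 4 → M) :
    f (koszulDiff₃ R c) = koszulDiff₃ R (f ∘ c) := by
  simp [koszulDiff₃]

end KoszulDifferentials

section KoszulExactness

variable {R ι : Type*} [CommRing R]

local notation "𝕊" => MvPolynomial (Fin 4) R

lemma exists_koszulDiff₂_eq_of_koszulDiff₃_eq_zero {c : Fin 4 → ι → 𝕊}
    (h : koszulDiff₃ R c = 0) : ∃ Y, c = koszulDiff₂ R Y := by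
  obtain ⟨c₀, hc₀⟩ := exists_eq_killVar_compLeft_add_X_smul 3 (c 0)
  obtain ⟨c₁, hc₁⟩ := exists_eq_killVar_compLeft_add_X_smul 3 (c 1)
  obtain ⟨c₂, hc₂⟩ := exists_eq_killVar_compLeft_add_X_smul 3 (c 2)
  set κ := (killVar (R := R) (3 : Fin 4)).compLeft ι
  have hκ : (X 0 : 𝕊) • κ (c 0) + (X 1 : 𝕊) • -κ (c 1) + (X 2 : 𝕊) • κ (c 2) = 0 := by
    have := congrArg κ h
    simp only [koszulDiff₃, LinearMap.coe_mk, AddHom.coe_mk, κ, map_add, map_sub,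
      killVar_compLeft_smul, killVar_X_self, killVar_X_of_ne (show (0 : Fin 4) ≠ 3 by decide),
      killVar_X_of_ne (show (1 : Fin 4) ≠ 3 by decide),
      killVar_X_of_ne (show (2 : Fin 4) ≠ 3 by decide), zero_smul, sub_zero, map_zero] at this
    rw [← this]; module
  obtain ⟨α, β, γ, h0, h1, h2⟩ :=
    exists_eq_cross_of_X_smul_add_eq_zero (by decide) (by decide) (by decide) hκ
  have hc₃ : c 3 = (X 0 : 𝕊) • c₀ - (X 1 : 𝕊) • c₁ + (X 2 : 𝕊) • c₂ := by
    refine X_smul_left_cancel (t := 3) ?_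
    simp only [koszulDiff₃, LinearMap.coe_mk, AddHom.coe_mk] at h
    rw [hc₀, hc₁, hc₂, h0, h2, neg_eq_iff_eq_neg.mp h1] at h
    linear_combination (norm := module) -h
  refine ⟨![![0, c₂, c₁, α], ![0, 0, c₀, β], ![0, 0, 0, γ], ![0, 0, 0, 0]], ?_⟩
  ext w : 1
  fin_cases w <;> simp [koszulDiff₂]
  · linear_combination (norm := module) hc₀ + h0
  · linear_combination (norm := module) hc₁ - h1
  · linear_combination (norm := module) hc₂ + h2
  · exact hc₃

lemma exists_koszulDiff₁_eq_of_koszulDiff₂_eq_zero {b : Fin 4 → Fin 4 → ι → 𝕊}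
    (h : koszulDiff₂ R b = 0) : ∃ θ, ∀ s t, s < t → b s t = koszulDiff₁ R θ s t := by
  have h1 := congrFun h 1
  have h2 := congrFun h 2
  have h3 := congrFun h 3
  simp only [koszulDiff₂, LinearMap.coe_mk, AddHom.coe_mk, Matrix.cons_val, Pi.zero_apply]
    at h1 h2 h3
  obtain ⟨ψ₁, hψ₁⟩ := exists_eq_killVar_compLeft_add_X_smul 0 (b 0 1)
  obtain ⟨ψ₂, hψ₂⟩ := exists_eq_killVar_compLeft_add_X_smul 0 (b 0 2)
  obtain ⟨ψ₃, hψ₃⟩ := exists_eq_killVar_compLeft_add_X_smul 0 (b 0 3)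
  set κ := (killVar (R := R) (0 : Fin 4)).compLeft ι
  have hκ₁₂ : (X 1 : 𝕊) • κ (b 0 2) = (X 2 : 𝕊) • κ (b 0 1) := by
    have := congrArg κ h3
    simp only [κ, map_add, map_sub, killVar_compLeft_smul, killVar_X_self,
      killVar_X_of_ne (show (1 : Fin 4) ≠ 0 by decide),
      killVar_X_of_ne (show (2 : Fin 4) ≠ 0 by decide), zero_smul, zero_sub, map_zero] at this
    linear_combination (norm := module) -this
  have hκ₁₃ : (X 1 : 𝕊) • κ (b 0 3) = (X 3 : 𝕊) • κ (b 0 1) := by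
    have := congrArg κ h2
    simp only [κ, map_add, map_sub, killVar_compLeft_smul, killVar_X_self,
      killVar_X_of_ne (show (1 : Fin 4) ≠ 0 by decide),
      killVar_X_of_ne (show (3 : Fin 4) ≠ 0 by decide), zero_smul, zero_sub, map_zero] at this
    linear_combination (norm := module) -this
  obtain ⟨w, hw₁⟩ := exists_eq_X_smul_of_X_smul_eq (by decide) hκ₁₂
  have hw₂ : κ (b 0 2) = (X 2 : 𝕊) • w :=
    X_smul_left_cancel (t := 1) (by rw [hκ₁₂, hw₁, smul_comm])
  have hw₃ : κ (b 0 3) = (X 3 : 𝕊) • w :=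
    X_smul_left_cancel (t := 1) (by rw [hκ₁₃, hw₁, smul_comm])
  refine ⟨![-w, ψ₁, ψ₂, ψ₃], fun s t hst => ?_⟩
  fin_cases s <;> fin_cases t <;> simp [koszulDiff₁_apply] at hst ⊢
  · linear_combination (norm := module) hψ₁ + hw₁
  · linear_combination (norm := module) hψ₂ + hw₂
  · linear_combination (norm := module) hψ₃ + hw₃
  · refine X_smul_left_cancel (t := 0) ?_
    linear_combination (norm := module) h3 + (X 1 : 𝕊) • (hψ₂ + hw₂) - (X 2 : 𝕊) • (hψ₁ + hw₁)
  · refine X_smul_left_cancel (t := 0) ?_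
    linear_combination (norm := module) h2 + (X 1 : 𝕊) • (hψ₃ + hw₃) - (X 3 : 𝕊) • (hψ₁ + hw₁)
  · refine X_smul_left_cancel (t := 0) ?_
    linear_combination (norm := module) h1 + (X 2 : 𝕊) • (hψ₃ + hw₃) - (X 3 : 𝕊) • (hψ₂ + hw₂)

end KoszulExactness

section IntGrading

variable {σ R : Type*} [CommSemiring R]

variable (σ R) in
/-- `ℤ`-indexed homogeneous pieces, matching the `toNat` conventions of `GradedFreeRes` and
`grIdeal`. -/
noncomputable def homogeneousSubmoduleInt (m : ℤ) : Submodule R (MvPolynomial σ R) :=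
  if m < 0 then ⊥ else homogeneousSubmodule σ R m.toNat

noncomputable def homogeneousComponentInt (m : ℤ) : MvPolynomial σ R →ₗ[R] MvPolynomial σ R :=
  if m < 0 then 0 else homogeneousComponent m.toNat

lemma mem_homogeneousSubmoduleInt_iff {p : MvPolynomial σ R} {m : ℤ} :
    p ∈ homogeneousSubmoduleInt σ R m ↔ p.IsHomogeneous m.toNat ∧ (m < 0 → p = 0) := by
  unfold homogeneousSubmoduleInt
  split_ifs with hm
  · simp +contextual [hm, isHomogeneous_zero]
  · simp [hm, mem_homogeneousSubmodule]

lemma mem_homogeneousSubmoduleInt_natCast {p : MvPolynomial σ R} {n : ℕ} (hp : p.IsHomogeneous n) :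
    p ∈ homogeneousSubmoduleInt σ R n :=
  mem_homogeneousSubmoduleInt_iff.mpr ⟨by simpa using hp, by omega⟩

lemma X_mul_mem_homogeneousSubmoduleInt (t : σ) {p : MvPolynomial σ R} {m : ℤ}
    (hp : p ∈ homogeneousSubmoduleInt σ R m) : X t * p ∈ homogeneousSubmoduleInt σ R (m + 1) := by
  obtain ⟨hhom, hneg⟩ := mem_homogeneousSubmoduleInt_iff.mp hp
  rcases lt_or_ge m 0 with hm | hm
  · simp [hneg hm]
  · refine mem_homogeneousSubmoduleInt_iff.mpr ⟨?_, by omega⟩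
    rw [show (m + 1).toNat = 1 + m.toNat by omega]
    exact (isHomogeneous_X R t).mul hhom

lemma exists_eq_sum_X_mul_of_mem_homogeneousSubmoduleInt [Fintype σ] {p : MvPolynomial σ R}
    {m : ℤ} (hm : 0 < m) (hp : p ∈ homogeneousSubmoduleInt σ R m) :
    ∃ c : σ → MvPolynomial σ R, p = ∑ t, X t * c t := by
  have hspan : p ∈ Ideal.span (Set.range X) := by
    rw [← Set.image_univ, mem_ideal_span_X_image]
    intro d hd
    have hdeg := (mem_homogeneousSubmoduleInt_iff.mp hp).1 (mem_support_iff.mp hd)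
    obtain ⟨i, hi⟩ : ∃ i, d i ≠ 0 := by
      by_contra! h0
      rw [show d = 0 from Finsupp.ext h0] at hdeg
      simp at hdeg
      omega
    exact ⟨i, Set.mem_univ i, hi⟩
  obtain ⟨c, hc⟩ := Ideal.mem_span_range_iff_exists_fun.mp hspan
  exact ⟨c, by simp_rw [← hc, mul_comm]⟩

lemma homogeneousComponentInt_of_isHomogeneous {p : MvPolynomial σ R} {n : ℕ}
    (hp : p.IsHomogeneous n) (m : ℤ) :
    homogeneousComponentInt m p = if m = n then p else 0 := by
  unfold homogeneousComponentInt
  split_ifs with hm hmn hmn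
  · omega
  · rfl
  · rw [homogeneousComponent_of_mem hp, if_pos (by omega)]
  · rw [homogeneousComponent_of_mem hp, if_neg (by omega)]

lemma homogeneousComponentInt_mem (m : ℤ) (p : MvPolynomial σ R) :
    homogeneousComponentInt m p ∈ homogeneousSubmoduleInt σ R m := by
  unfold homogeneousComponentInt homogeneousSubmoduleInt
  split_ifs
  · exact zero_mem _
  · exact homogeneousComponent_isHomogeneous _ _

lemma homogeneousComponentInt_of_mem {p : MvPolynomial σ R} {m : ℤ}
    (hp : p ∈ homogeneousSubmoduleInt σ R m) : homogeneousComponentInt m p = p := by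
  unfold homogeneousComponentInt
  unfold homogeneousSubmoduleInt at hp
  split_ifs at hp ⊢
  · simp [(Submodule.mem_bot R).mp hp]
  · exact homogeneousComponent_eq_self hp

lemma homogeneousComponentInt_mul_of_mem {E : MvPolynomial σ R} {δ : ℤ}
    (hE : E ∈ homogeneousSubmoduleInt σ R δ) (m : ℤ) (p : MvPolynomial σ R) :
    homogeneousComponentInt m (p * E) = homogeneousComponentInt (m - δ) p * E := by
  obtain ⟨hEhom, hEneg⟩ := mem_homogeneousSubmoduleInt_iff.mp hE
  rcases lt_or_ge δ 0 with hδ | hδ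
  · simp [hEneg hδ]
  induction p using MvPolynomial.induction_on' with
  | monomial d c =>
    have hd : (monomial d c).IsHomogeneous d.degree := isHomogeneous_monomial c rfl
    rw [homogeneousComponentInt_of_isHomogeneous (hd.mul hEhom),
      homogeneousComponentInt_of_isHomogeneous hd]
    split_ifs <;> first | rfl | (exfalso; omega)
  | add p q hp hq => simp [add_mul, hp, hq]

lemma coe_mem_homogeneousSubmoduleInt_of_mem_grIdeal {k σ : Type} [Field k]
    {I : Ideal (MvPolynomial σ k)} {j : ℤ} {x : ↥I} (hx : x ∈ grIdeal I j) :
    (x : MvPolynomial σ k) ∈ homogeneousSubmoduleInt σ k j := by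
  unfold grIdeal at hx
  split_ifs at hx with hj
  · simp [(Submodule.mem_bot k).mp hx]
  induction hx using Submodule.span_induction with
  | mem y hy => exact mem_homogeneousSubmoduleInt_iff.mpr ⟨hy, fun h => absurd h hj⟩
  | zero => exact zero_mem _
  | add y z _ _ hy hz => exact add_mem hy hz
  | smul c y _ hy => exact Submodule.smul_mem _ c hy

end IntGrading

namespace GradedFreeRes

section General

variable {k σ M : Type} [Field k] [AddCommGroup M] [Module (MvPolynomial σ k) M] [Module k M]
  [IsScalarTower k (MvPolynomial σ k) M] {gr : ℤ → Submodule k M} (F : GradedFreeRes k σ M gr)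

instance (i : ℕ) : Fintype (F.ι i) := F.fin i

noncomputable def entry (i : ℕ) (b : F.ι (i + 1)) (y : F.ι i) : MvPolynomial σ k :=
  F.d i (fun b' => if b' = b then 1 else 0) y

lemma entry_mem (i : ℕ) (b : F.ι (i + 1)) (y : F.ι i) :
    F.entry i b y ∈ homogeneousSubmoduleInt σ k (F.twist (i + 1) b - F.twist i y) :=
  mem_homogeneousSubmoduleInt_iff.mpr (F.d_homog i b y)

lemma d_apply (i : ℕ) (w : F.ι (i + 1) → MvPolynomial σ k) (y : F.ι i) :
    F.d i w y = ∑ b, w b * F.entry i b y := by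
  conv_lhs => rw [LinearMap.pi_apply_eq_sum_univ (F.d i) w]
  simp [entry, eq_comm]

/-- The degree-`j` part of the free module `⨁_b S(-twist i b)`. -/
noncomputable def gradedPiece (i : ℕ) (j : ℤ) : Submodule k (F.ι i → MvPolynomial σ k) :=
  Submodule.pi Set.univ fun b => homogeneousSubmoduleInt σ k (j - F.twist i b)

noncomputable def gradedProj (i : ℕ) (j : ℤ) (w : F.ι i → MvPolynomial σ k) :
    F.ι i → MvPolynomial σ k :=
  fun b => homogeneousComponentInt (j - F.twist i b) (w b)

lemma gradedProj_mem (i : ℕ) (j : ℤ) (w : F.ι i → MvPolynomial σ k) :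
    F.gradedProj i j w ∈ F.gradedPiece i j :=
  fun _ _ => homogeneousComponentInt_mem _ _

lemma gradedProj_of_mem {i : ℕ} {j : ℤ} {w : F.ι i → MvPolynomial σ k}
    (hw : w ∈ F.gradedPiece i j) : F.gradedProj i j w = w :=
  funext fun b => homogeneousComponentInt_of_mem (hw b (Set.mem_univ b))

lemma d_gradedProj (i : ℕ) (j : ℤ) (w : F.ι (i + 1) → MvPolynomial σ k) :
    F.d i (F.gradedProj (i + 1) j w) = F.gradedProj i j (F.d i w) := by
  ext y
  simp only [gradedProj, d_apply, map_sum,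
    homogeneousComponentInt_mul_of_mem (F.entry_mem i _ y), sub_sub_sub_cancel_right]

lemma exists_mem_gradedPiece_d_eq {i : ℕ} {j : ℤ} {v : F.ι i → MvPolynomial σ k}
    (hv : v ∈ LinearMap.range (F.d i)) (hvj : v ∈ F.gradedPiece i j) :
    ∃ w ∈ F.gradedPiece (i + 1) j, F.d i w = v := by
  obtain ⟨w, rfl⟩ := hv
  exact ⟨F.gradedProj (i + 1) j w, F.gradedProj_mem _ _ w, by
    rw [d_gradedProj, F.gradedProj_of_mem hvj]⟩

lemma X_smul_mem_gradedPiece (t : σ) {i : ℕ} {j : ℤ} {w : F.ι i → MvPolynomial σ k}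
    (hw : w ∈ F.gradedPiece i j) : (X t : MvPolynomial σ k) • w ∈ F.gradedPiece i (j + 1) := by
  intro b _
  have := X_mul_mem_homogeneousSubmoduleInt t (hw b (Set.mem_univ b))
  rwa [sub_add_eq_add_sub] at this

lemma exists_eq_sum_X_smul_of_mem_gradedPiece [Fintype σ] {i : ℕ} {j : ℤ}
    {w : F.ι i → MvPolynomial σ k} (hw : w ∈ F.gradedPiece i j)
    (htwist : ∀ b, F.twist i b < j) :
    ∃ c : σ → F.ι i → MvPolynomial σ k, w = ∑ t, (X t : MvPolynomial σ k) • c t := by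
  choose c hc using fun b =>
    exists_eq_sum_X_mul_of_mem_homogeneousSubmoduleInt (sub_pos.mpr (htwist b))
      (hw b (Set.mem_univ b))
  exact ⟨fun t b => c b t, funext fun b => by simp [hc b]⟩

lemma d_d_apply (i : ℕ) (x : F.ι (i + 2) → MvPolynomial σ k) : F.d i (F.d (i + 1) x) = 0 :=
  LinearMap.mem_ker.mp (by rw [F.exact_d]; exact ⟨x, rfl⟩)

lemma aug_d_apply (x : F.ι 1 → MvPolynomial σ k) : F.aug (F.d 0 x) = 0 :=
  LinearMap.mem_ker.mp (by rw [F.exact_aug]; exact ⟨x, rfl⟩)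

lemma koszulDiff₁_mem_gradedPiece {i : ℕ} {j : ℤ} {a : σ → F.ι i → MvPolynomial σ k}
    (ha : ∀ t, a t ∈ F.gradedPiece i j) (s t : σ) :
    koszulDiff₁ k a s t ∈ F.gradedPiece i (j + 1) :=
  sub_mem (F.X_smul_mem_gradedPiece s (ha t)) (F.X_smul_mem_gradedPiece t (ha s))

end General

section Augmentation

variable {k σ : Type} [Field k] {I : Ideal (MvPolynomial σ k)}
  (F : GradedFreeRes k σ ↥I (grIdeal I))

noncomputable def gen (b : F.ι 0) : MvPolynomial σ k :=
  F.aug (fun b' => if b' = b then 1 else 0)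

lemma gen_mem (b : F.ι 0) : F.gen b ∈ homogeneousSubmoduleInt σ k (F.twist 0 b) :=
  coe_mem_homogeneousSubmoduleInt_of_mem_grIdeal (F.aug_homog b)

lemma coe_aug_apply (w : F.ι 0 → MvPolynomial σ k) :
    (F.aug w : MvPolynomial σ k) = ∑ b, w b * F.gen b := by
  conv_lhs => rw [LinearMap.pi_apply_eq_sum_univ F.aug w]
  simp [gen, eq_comm]

lemma coe_aug_gradedProj (j : ℤ) (w : F.ι 0 → MvPolynomial σ k) :
    (F.aug (F.gradedProj 0 j w) : MvPolynomial σ k) =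
      homogeneousComponentInt j (F.aug w : MvPolynomial σ k) := by
  simp only [coe_aug_apply, gradedProj, map_sum, homogeneousComponentInt_mul_of_mem (F.gen_mem _)]

lemma exists_mem_gradedPiece_aug_eq {j : ℤ} (x : ↥I)
    (hx : (x : MvPolynomial σ k) ∈ homogeneousSubmoduleInt σ k j) :
    ∃ a ∈ F.gradedPiece 0 j, F.aug a = x := by
  obtain ⟨a, rfl⟩ := F.aug_surj x
  exact ⟨F.gradedProj 0 j a, F.gradedProj_mem 0 j a, Subtype.ext <| by
    rw [coe_aug_gradedProj, homogeneousComponentInt_of_mem hx]⟩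

end Augmentation

variable {k : Type} [Field k] {I : Ideal (MvPolynomial (Fin 4) k)}

local notation "𝕊" => MvPolynomial (Fin 4) k

section FourVariables

variable {M : Type} [AddCommGroup M] [Module (MvPolynomial (Fin 4) k) M] [Module k M]
  [IsScalarTower k (MvPolynomial (Fin 4) k) M]
  {gr : ℤ → Submodule k M} (F : GradedFreeRes k (Fin 4) M gr)

lemma koszulDiff₂_mem_gradedPiece {i : ℕ} {j : ℤ} {b : Fin 4 → Fin 4 → F.ι i → 𝕊}
    (hb : ∀ s t, b s t ∈ F.gradedPiece i j) (w : Fin 4) :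
    koszulDiff₂ k b w ∈ F.gradedPiece i (j + 1) := by
  have hX := fun t s u => F.X_smul_mem_gradedPiece t (hb s u)
  fin_cases w <;> simp only [koszulDiff₂, LinearMap.coe_mk, AddHom.coe_mk] <;>
    exact add_mem (sub_mem (hX _ _ _) (hX _ _ _)) (hX _ _ _)

lemma koszulDiff₃_mem_gradedPiece {i : ℕ} {j : ℤ} {c : Fin 4 → F.ι i → 𝕊}
    (hc : ∀ w, c w ∈ F.gradedPiece i j) : koszulDiff₃ k c ∈ F.gradedPiece i (j + 1) := by
  have hX := fun t w => F.X_smul_mem_gradedPiece t (hc w)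
  exact sub_mem (add_mem (sub_mem (hX _ _) (hX _ _)) (hX _ _)) (hX _ _)

end FourVariables

variable {gr : ℤ → Submodule k ↥I} (F : GradedFreeRes k (Fin 4) ↥I gr)

lemma mem_of_koszul_staircase {u : 𝕊} {a : Fin 4 → F.ι 0 → 𝕊}
    {b : Fin 4 → Fin 4 → F.ι 1 → 𝕊} {E Q : Fin 4 → F.ι 2 → 𝕊}
    (ha : ∀ t, (F.aug (a t) : 𝕊) = X t * u) (hb : ∀ s t, F.d 0 (b s t) = koszulDiff₁ k a s t)
    (hE : ∀ w, F.d 1 (E w) = koszulDiff₂ k b w) (hQ : ∀ w, F.d 1 (Q w) = 0)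
    (hEQ : koszulDiff₃ k E = koszulDiff₃ k Q) : u ∈ I := by
  obtain ⟨Y, hY⟩ := exists_koszulDiff₂_eq_of_koszulDiff₃_eq_zero (c := E - Q)
    (by rw [map_sub, hEQ, sub_self])
  have h₂ : koszulDiff₂ k (b - fun s t => F.d 1 (Y s t)) = 0 := by
    ext1 w
    rw [map_sub, Pi.sub_apply, ← map_koszulDiff₂, ← congrFun hY w, Pi.sub_apply, map_sub, hE,
      hQ, sub_zero, sub_self, Pi.zero_apply]
  obtain ⟨θ, hθ⟩ := exists_koszulDiff₁_eq_of_koszulDiff₂_eq_zero h₂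
  have hc : ∀ t, (X 0 : 𝕊) • (a t - F.d 0 (θ t)) = (X t : 𝕊) • (a 0 - F.d 0 (θ 0)) := by
    intro t
    rcases eq_or_ne t 0 with rfl | ht
    · rfl
    have := congrArg (F.d 0) (hθ 0 t (pos_iff_ne_zero.mpr ht))
    rw [Pi.sub_apply, Pi.sub_apply, map_sub, d_d_apply, sub_zero, hb, map_koszulDiff₁,
      koszulDiff₁_apply, koszulDiff₁_apply, Function.comp_apply, Function.comp_apply] at this
    linear_combination (norm := module) this
  obtain ⟨w, hw⟩ := exists_eq_X_smul_of_forall_X_smul_eq (show (0 : Fin 4) ≠ 1 by decide) hc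
  have hu : X 0 * u = X 0 * (F.aug w : 𝕊) := by
    rw [← ha 0, show a 0 = (a 0 - F.d 0 (θ 0)) + F.d 0 (θ 0) by abel, map_add, aug_d_apply,
      add_zero, hw 0, map_smul]
    rfl
  exact X_mul_cancel_left_iff.mp hu ▸ (F.aug w).2

theorem mem_of_forall_X_mul_mem (F : GradedFreeRes k (Fin 4) ↥I (grIdeal I)) {u : 𝕊} {n : ℕ}
    (hu : u.IsHomogeneous n) (hmem : ∀ t, X t * u ∈ I)
    (htwist : ∀ b : F.ι 3, F.twist 3 b < n + 4) : u ∈ I := by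
  choose a ha_mem ha using fun t => F.exists_mem_gradedPiece_aug_eq ⟨X t * u, hmem t⟩
    (X_mul_mem_homogeneousSubmoduleInt t (mem_homogeneousSubmoduleInt_natCast hu))
  have hδa : ∀ s t, koszulDiff₁ k a s t ∈ LinearMap.range (F.d 0) := by
    intro s t
    rw [← F.exact_aug, LinearMap.mem_ker, koszulDiff₁_apply, map_sub, map_smul, map_smul, ha, ha]
    ext1
    simp only [Submodule.coe_sub, Submodule.coe_smul, smul_eq_mul, ZeroMemClass.coe_zero]
    ring
  choose b hb_mem hb using fun s t =>
    F.exists_mem_gradedPiece_d_eq (hδa s t) (F.koszulDiff₁_mem_gradedPiece ha_mem s t)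
  have hδb : ∀ w, koszulDiff₂ k b w ∈ LinearMap.range (F.d 1) := by
    intro w
    rw [← F.exact_d 0, LinearMap.mem_ker, map_koszulDiff₂]
    simp only [hb, koszulDiff₂_koszulDiff₁, Pi.zero_apply]
  choose E hE_mem hE using fun w =>
    F.exists_mem_gradedPiece_d_eq (hδb w) (F.koszulDiff₂_mem_gradedPiece hb_mem w)
  have hδE : koszulDiff₃ k E ∈ LinearMap.range (F.d 2) := by
    rw [← F.exact_d 1, LinearMap.mem_ker, map_koszulDiff₃]
    simp only [Function.comp_def, hE, koszulDiff₃_koszulDiff₂]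
  obtain ⟨h, h_mem, hh⟩ := F.exists_mem_gradedPiece_d_eq hδE (F.koszulDiff₃_mem_gradedPiece hE_mem)
  obtain ⟨c, rfl⟩ := F.exists_eq_sum_X_smul_of_mem_gradedPiece h_mem
    (fun b => by linarith [htwist b])
  refine F.mem_of_koszul_staircase (Q := ![F.d 2 (c 0), -F.d 2 (c 1), F.d 2 (c 2), -F.d 2 (c 3)])
    (fun t => congrArg Subtype.val (ha t)) hb hE ?_ ?_
  · intro w
    fin_cases w <;> simp [d_d_apply]
  · rw [← hh]
    simp [koszulDiff₃, Fin.sum_univ_four]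

end GradedFreeRes

section CavigliaIdeal

variable {R : Type*} [CommRing R]

local notation "𝕊" => MvPolynomial (Fin 4) R

variable (R) in
/-- Caviglia's ideal `I_d`, written with `d = e + 2` so that no truncated subtraction occurs. -/
noncomputable def cavigliaIdeal (e : ℕ) : Ideal 𝕊 :=
  Ideal.span {X 3 ^ (e + 1) * X 0 - X 2 ^ (e + 1) * X 1, X 0 ^ (e + 2), X 1 ^ (e + 2)}

variable (R) in
noncomputable def cavigliaSocle (e : ℕ) : 𝕊 :=
  X 0 * X 1 ^ (e + 1) * X 2 ^ (e ^ 2 + 2 * e) * X 3 ^ e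

lemma isHomogeneous_cavigliaSocle (e : ℕ) :
    (cavigliaSocle R e).IsHomogeneous (e ^ 2 + 4 * e + 2) := by
  have := (((isHomogeneous_X R (0 : Fin 4)).mul (isHomogeneous_X_pow 1 (e + 1))).mul
    (isHomogeneous_X_pow 2 (e ^ 2 + 2 * e))).mul (isHomogeneous_X_pow 3 e)
  rw [show e ^ 2 + 4 * e + 2 = 1 + (e + 1) + (e ^ 2 + 2 * e) + e by ring]
  exact this

lemma sub_pow_mem_cavigliaIdeal (e m : ℕ) :
    (X 1 * X 2 ^ (e + 1) : 𝕊) ^ m - (X 0 * X 3 ^ (e + 1)) ^ m ∈ cavigliaIdeal R e := by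
  refine (cavigliaIdeal R e).mem_of_dvd (sub_dvd_pow_sub_pow _ _ m) ?_
  rw [show (X 1 * X 2 ^ (e + 1) - X 0 * X 3 ^ (e + 1) : 𝕊) =
    -(X 3 ^ (e + 1) * X 0 - X 2 ^ (e + 1) * X 1) by ring]
  exact neg_mem (Ideal.subset_span (Set.mem_insert _ _))

lemma X_mul_cavigliaSocle_mem (e : ℕ) (t : Fin 4) : X t * cavigliaSocle R e ∈ cavigliaIdeal R e := by
  have hf : (X 3 ^ (e + 1) * X 0 - X 2 ^ (e + 1) * X 1 : 𝕊) ∈ cavigliaIdeal R e :=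
    Ideal.subset_span (by simp)
  have hx₀ : (X 0 ^ (e + 2) : 𝕊) ∈ cavigliaIdeal R e := Ideal.subset_span (by simp)
  have hx₁ : (X 1 ^ (e + 2) : 𝕊) ∈ cavigliaIdeal R e := Ideal.subset_span (by simp)
  fin_cases t <;> simp only [cavigliaSocle, Fin.zero_eta, Fin.mk_one, Fin.reduceFinMk]
  · rw [show X 0 * (X 0 * X 1 ^ (e + 1) * X 2 ^ (e ^ 2 + 2 * e) * X 3 ^ e : 𝕊) =
        X 0 ^ 2 * X 1 * X 2 ^ e * X 3 ^ e * ((X 1 * X 2 ^ (e + 1)) ^ e - (X 0 * X 3 ^ (e + 1)) ^ e)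
        + X 1 * X 2 ^ e * X 3 ^ (e + e * (e + 1)) * X 0 ^ (e + 2) by ring]
    exact add_mem (Ideal.mul_mem_left _ _ (sub_pow_mem_cavigliaIdeal e e))
      (Ideal.mul_mem_left _ _ hx₀)
  · rw [show X 1 * (X 0 * X 1 ^ (e + 1) * X 2 ^ (e ^ 2 + 2 * e) * X 3 ^ e : 𝕊) =
        X 0 * X 2 ^ (e ^ 2 + 2 * e) * X 3 ^ e * X 1 ^ (e + 2) by ring]
    exact Ideal.mul_mem_left _ _ hx₁
  · rw [show X 2 * (X 0 * X 1 ^ (e + 1) * X 2 ^ (e ^ 2 + 2 * e) * X 3 ^ e : 𝕊) =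
        X 0 * X 3 ^ e * ((X 1 * X 2 ^ (e + 1)) ^ (e + 1) - (X 0 * X 3 ^ (e + 1)) ^ (e + 1))
        + X 3 ^ (e + (e + 1) * (e + 1)) * X 0 ^ (e + 2) by ring]
    exact add_mem (Ideal.mul_mem_left _ _ (sub_pow_mem_cavigliaIdeal e (e + 1)))
      (Ideal.mul_mem_left _ _ hx₀)
  · rw [show X 3 * (X 0 * X 1 ^ (e + 1) * X 2 ^ (e ^ 2 + 2 * e) * X 3 ^ e : 𝕊) =
        X 1 ^ (e + 1) * X 2 ^ (e ^ 2 + 2 * e) * (X 3 ^ (e + 1) * X 0 - X 2 ^ (e + 1) * X 1)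
        + X 2 ^ (e ^ 2 + 3 * e + 1) * X 1 ^ (e + 2) by ring]
    exact add_mem (Ideal.mul_mem_left _ _ hf) (Ideal.mul_mem_left _ _ hx₁)

/-- Kills the binomial generator of `cavigliaIdeal`, so the image of the ideal is a monomial
ideal. -/
noncomputable def cavigliaSubst (e : ℕ) : 𝕊 →ₐ[R] 𝕊 :=
  aeval ![X 0 * X 2 ^ (e + 1), X 0 * X 3 ^ (e + 1), X 2, X 3]

lemma map_cavigliaIdeal_le (e : ℕ) : Ideal.map (cavigliaSubst e) (cavigliaIdeal R e) ≤
    Ideal.span ((fun s => monomial s 1) ''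
      {Finsupp.single 0 (e + 2) + Finsupp.single 2 ((e + 1) * (e + 2)),
        Finsupp.single 0 (e + 2) + Finsupp.single 3 ((e + 1) * (e + 2))}) := by
  rw [cavigliaIdeal, Ideal.map_span, Ideal.span_le]
  rintro _ ⟨g, hg, rfl⟩
  simp only [Set.mem_insert_iff, Set.mem_singleton_iff] at hg
  rcases hg with rfl | rfl | rfl
  · have hf : cavigliaSubst e (X 3 ^ (e + 1) * X 0 - X 2 ^ (e + 1) * X 1 : 𝕊) = 0 := by
      simp [cavigliaSubst]
      ring
    rw [hf]
    exact zero_mem _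
  · refine Ideal.subset_span ⟨_, Or.inl rfl, ?_⟩
    simp only [cavigliaSubst, map_pow, aeval_X, Matrix.cons_val_zero]
    rw [mul_pow, ← pow_mul, X_pow_eq_monomial, X_pow_eq_monomial, monomial_mul, one_mul]
  · refine Ideal.subset_span ⟨_, Or.inr rfl, ?_⟩
    simp only [cavigliaSubst, map_pow, aeval_X, Matrix.cons_val_one, Matrix.cons_val_zero]
    rw [mul_pow, ← pow_mul, X_pow_eq_monomial, X_pow_eq_monomial, monomial_mul, one_mul]

lemma cavigliaSubst_cavigliaSocle (e : ℕ) :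
    cavigliaSubst e (cavigliaSocle R e) = monomial (Finsupp.single 0 (e + 2) +
      Finsupp.single 2 (e ^ 2 + 3 * e + 1) + Finsupp.single 3 (e ^ 2 + 3 * e + 1)) 1 := by
  rw [show (monomial _ 1 : 𝕊) = X 0 ^ (e + 2) * X 2 ^ (e ^ 2 + 3 * e + 1) *
    X 3 ^ (e ^ 2 + 3 * e + 1) by simp only [X_pow_eq_monomial, monomial_mul, one_mul]]
  simp [cavigliaSubst, cavigliaSocle]
  ring

lemma cavigliaSocle_not_mem [Nontrivial R] (e : ℕ) : cavigliaSocle R e ∉ cavigliaIdeal R e := by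
  intro hu
  have := map_cavigliaIdeal_le e (Ideal.mem_map_of_mem _ hu)
  rw [cavigliaSubst_cavigliaSocle, mem_ideal_span_monomial_image] at this
  obtain ⟨s, hs, hle⟩ := this _ (by
    rw [support_monomial, if_neg one_ne_zero]; exact Finset.mem_singleton_self _)
  rcases hs with rfl | rfl
  · have := hle 2
    simp at this
    nlinarith
  · have := hle 3
    simp at this
    nlinarith

end CavigliaIdeal

/-- **Caviglia.** For every `d ≥ 2`, the ideal
`I_d = (z₂^{d-1} y₁ − y₂^{d-1} z₁, y₁^d, z₁^d)` in `k[y₁,z₁,y₂,z₂]`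
(variables `y₁ = X 0`, `z₁ = X 1`, `y₂ = X 2`, `z₂ = X 3`) satisfies
`reg I_d ≥ d² − 1`: every regularity bound `r` for `I_d` satisfies
`r ≥ d² − 1`. -/
theorem caviglia_regularity_lower_bound
    {k : Type} [Field k] (d : ℕ) (hd : 2 ≤ d)
    (I : Ideal (MvPolynomial (Fin 4) k))
    (hI : I = Ideal.span
      {X 3 ^ (d - 1) * X 0 - X 2 ^ (d - 1) * X 1, X 0 ^ d, X 1 ^ d}) :
    ∀ r : ℤ, HasRegBound k (Fin 4) ↥I (grIdeal I) r → (d : ℤ) ^ 2 - 1 ≤ r := by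
  rintro r ⟨F, hF⟩
  obtain ⟨e, rfl⟩ : ∃ e, d = e + 2 := ⟨d - 2, by omega⟩
  obtain rfl : I = cavigliaIdeal k e := hI
  by_contra hlt
  refine cavigliaSocle_not_mem e (F.mem_of_forall_X_mul_mem (isHomogeneous_cavigliaSocle e)
    (X_mul_cavigliaSocle_mem e) fun b => ?_)
  have := hF 3 b
  push_cast at hlt this ⊢
  linarith
end

section
/- In the setting of the three-generated ideal T = (G, y_0^Δ, z_0^δ) of Proposition 5.1, with U = (g_0,...,g_s) ⊂ Q, one has deg(R/T) ≤ δ·s, where deg(R/T) is the multiplicity (normalized leading coefficient of the Hilbert polynomial of R/T); equivalently, dim_{K(Q)} (R/T) ⊗_Q K(Q) ≤ δ·s. -/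
set_option synthInstance.maxHeartbeats 1000000
set_option maxHeartbeats 1000000

open MvPolynomial

theorem aux_main {A : Type} [CommRing A] [IsDomain A]
    (s m Δ δ : ℕ) (g : Fin (s + 1) → A)
    (hgs : g (Fin.last s) ≠ 0)
    (G : MvPolynomial (Fin 2) A)
    (hG : G = ∑ i : Fin (s + 1), C (g i) * (X 0) ^ (i : ℕ) * (X 1) ^ ((m + 1) * (s - (i : ℕ))))
    (T : Ideal (MvPolynomial (Fin 2) A))
    (hT : T = Ideal.span {G, (X 0) ^ Δ, (X 1) ^ δ}) :
    Module.rank (FractionRing A)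
      (LocalizedModule (nonZeroDivisors A) (MvPolynomial (Fin 2) A ⧸ T)) ≤ (δ * s : ℕ) := by
  classical
  have hGT : Ideal.Quotient.mk T G = 0 := by
    rw [Ideal.Quotient.eq_zero_iff_mem, hT]
    exact Ideal.subset_span (by simp)
  have hsm : ∀ (c : A) (x : MvPolynomial (Fin 2) A),
      c • (Ideal.Quotient.mk T x) = Ideal.Quotient.mk T (C c * x) := by
    intro c x
    rw [← MvPolynomial.smul_eq_C_mul]
    exact (Submodule.Quotient.mk_smul T c x).symm
  set e : ℕ → ℕ → (MvPolynomial (Fin 2) A ⧸ T) :=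
    fun a b => Ideal.Quotient.mk T ((X 0) ^ a * (X 1) ^ b) with he
  -- vanishing for large b
  have hz : ∀ a b : ℕ, δ ≤ b → e a b = 0 := by
    intro a b hb
    rw [he]
    simp only
    rw [Ideal.Quotient.eq_zero_iff_mem, hT]
    have : (X 0 : MvPolynomial (Fin 2) A) ^ a * X 1 ^ b
        = (X 0 ^ a * X 1 ^ (b - δ)) * X 1 ^ δ := by
      rw [mul_assoc, ← pow_add, Nat.sub_add_cancel hb]
    rw [this]
    exact Ideal.mul_mem_left _ _ (Ideal.subset_span (by simp))
  -- key polynomial identity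
  have hid : ∀ a b : ℕ, s ≤ a →
      C (g (Fin.last s)) * ((X 0 : MvPolynomial (Fin 2) A) ^ a * X 1 ^ b) +
        ∑ i : Fin s, C (g i.castSucc) *
          ((X 0 : MvPolynomial (Fin 2) A) ^ (a - s + (i : ℕ)) *
            X 1 ^ (b + (m + 1) * (s - (i : ℕ)))) =
      (X 0 ^ (a - s) * X 1 ^ b) * G := by
    intro a b ha
    rw [hG, Finset.mul_sum, Fin.sum_univ_castSucc, add_comm]
    congr 1
    · apply Finset.sum_congr rfl
      intro i _
      have hc : ((i.castSucc : Fin (s+1)) : ℕ) = (i : ℕ) := rfl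
      rw [hc, pow_add, pow_add]
      ring
    · have hx : (X 0 : MvPolynomial (Fin 2) A) ^ (a - s) * X 0 ^ s = X 0 ^ a := by
        rw [← pow_add, Nat.sub_add_cancel ha]
      have hl : ((Fin.last s : Fin (s+1)) : ℕ) = s := rfl
      rw [hl, Nat.sub_self, Nat.mul_zero, pow_zero, mul_one, ← hx]
      ring
  -- reduction in the quotient
  have hred : ∀ a b : ℕ, s ≤ a →
      g (Fin.last s) • e a b =
        - ∑ i : Fin s, g i.castSucc • e (a - s + (i : ℕ)) (b + (m + 1) * (s - (i : ℕ))) := by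
    intro a b ha
    have h1 := congrArg (Ideal.Quotient.mk T) (hid a b ha)
    have hr0 : Ideal.Quotient.mk T ((X 0 : MvPolynomial (Fin 2) A) ^ (a - s) * X 1 ^ b * G) = 0 := by
      rw [map_mul, hGT, mul_zero]
    rw [map_add, hr0, map_sum] at h1
    simp only [← hsm] at h1
    exact eq_neg_of_add_eq_zero_left h1
  -- the A-span of the small monomials
  set N : Submodule A (MvPolynomial (Fin 2) A ⧸ T) :=
    Submodule.span A (Set.range fun p : Fin s × Fin δ => e (p.1 : ℕ) (p.2 : ℕ)) with hN
  set gs : A := g (Fin.last s) with hgsdef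
  -- saturation of N with respect to powers of gs
  set N' : Submodule A (MvPolynomial (Fin 2) A ⧸ T) :=
    { carrier := {x | ∃ n : ℕ, gs ^ n • x ∈ N}
      add_mem' := by
        rintro x y ⟨n₁, h₁⟩ ⟨n₂, h₂⟩
        refine ⟨n₁ + n₂, ?_⟩
        rw [smul_add]
        apply add_mem
        · have : gs ^ (n₁ + n₂) • x = gs ^ n₂ • (gs ^ n₁ • x) := by
            rw [← mul_smul, ← pow_add, add_comm]
          rw [this]; exact N.smul_mem _ h₁
        · have : gs ^ (n₁ + n₂) • y = gs ^ n₁ • (gs ^ n₂ • y) := by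
            rw [← mul_smul, ← pow_add]
          rw [this]; exact N.smul_mem _ h₂
      zero_mem' := ⟨0, by simp⟩
      smul_mem' := by
        rintro c x ⟨n, h⟩
        exact ⟨n, by rw [smul_comm]; exact N.smul_mem c h⟩ } with hN'
  have hNN' : ∀ x, x ∈ N → x ∈ N' := fun x hx => ⟨0, by simpa using hx⟩
  have hgsN' : ∀ x, gs • x ∈ N' → x ∈ N' := by
    rintro x ⟨n, h⟩
    refine ⟨n + 1, ?_⟩
    rw [pow_succ, mul_smul]
    exact h
  -- every monomial class lies in the saturation
  have key : ∀ a : ℕ, ∀ b : ℕ, e a b ∈ N' := by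
    intro a
    induction a using Nat.strong_induction_on with
    | _ a ih =>
      intro b
      by_cases hb : δ ≤ b
      · rw [hz a b hb]; exact N'.zero_mem
      · push_neg at hb
        by_cases ha : a < s
        · exact hNN' _ (Submodule.subset_span ⟨(⟨a, ha⟩, ⟨b, hb⟩), rfl⟩)
        · push_neg at ha
          apply hgsN'
          rw [hred a b ha]
          apply N'.neg_mem
          apply Submodule.sum_mem
          intro i _
          apply N'.smul_mem
          exact ih (a - s + (i : ℕ)) (by omega) _
  -- hence every element of the quotient lies in the saturation
  have hmon : ∀ (d : Fin 2 →₀ ℕ) (c : A),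
      (monomial d c : MvPolynomial (Fin 2) A) = C c * ((X 0) ^ (d 0) * (X 1) ^ (d 1)) := by
    intro d c
    rw [monomial_eq]
    congr 1
    rw [Finsupp.prod_fintype _ _ (fun i => pow_zero _)]
    exact Fin.prod_univ_two _
  have hall : ∀ x : MvPolynomial (Fin 2) A ⧸ T, x ∈ N' := by
    intro x
    obtain ⟨p, rfl⟩ := Ideal.Quotient.mk_surjective x
    have hps : Ideal.Quotient.mk T p
        = ∑ d ∈ p.support, Ideal.Quotient.mk T (monomial d (coeff d p)) := by
      conv_lhs => rw [p.as_sum]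
      rw [map_sum]
    rw [hps]
    apply Submodule.sum_mem
    intro d _
    rw [hmon d (coeff d p), ← hsm]
    exact N'.smul_mem _ (key (d 0) (d 1))
  -- pass to the localization
  have hgsS : gs ∈ nonZeroDivisors A := mem_nonZeroDivisors_of_ne_zero hgs
  set f : Fin s × Fin δ →
      LocalizedModule (nonZeroDivisors A) (MvPolynomial (Fin 2) A ⧸ T) :=
    fun p => LocalizedModule.mk (e (p.1 : ℕ) (p.2 : ℕ)) 1 with hf
  have htop : Submodule.span (FractionRing A) (Set.range f) = ⊤ := by
    rw [Submodule.eq_top_iff']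
    intro x
    induction x using LocalizedModule.induction_on with
    | _ mm t =>
      obtain ⟨n, hn⟩ := hall mm
      set c : nonZeroDivisors A := ⟨gs ^ n, pow_mem hgsS n⟩ with hc
      have hx : LocalizedModule.mk mm t
          = Localization.mk (1 : A) (c * t) • LocalizedModule.mk (gs ^ n • mm) (1 : nonZeroDivisors A) := by
        rw [LocalizedModule.mk_smul_mk, one_smul, mul_one]
        exact (LocalizedModule.mk_cancel_common_left c t mm).symm
      rw [hx]
      apply Submodule.smul_mem
      have h1 : LocalizedModule.mkLinearMap (nonZeroDivisors A) (MvPolynomial (Fin 2) A ⧸ T) (gs ^ n • mm)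
          ∈ Submodule.map (LocalizedModule.mkLinearMap (nonZeroDivisors A) (MvPolynomial (Fin 2) A ⧸ T)) N :=
        ⟨_, hn, rfl⟩
      have h2 : Submodule.map (LocalizedModule.mkLinearMap (nonZeroDivisors A) (MvPolynomial (Fin 2) A ⧸ T)) N
          ≤ Submodule.restrictScalars A (Submodule.span (FractionRing A) (Set.range f)) := by
        rw [hN, Submodule.map_span]
        refine le_trans ?_ (Submodule.span_le_restrictScalars A (FractionRing A) _)
        apply Submodule.span_mono
        rintro _ ⟨_, ⟨p, rfl⟩, rfl⟩
        exact ⟨p, rfl⟩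
      exact h2 h1
  calc Module.rank (FractionRing A)
        (LocalizedModule (nonZeroDivisors A) (MvPolynomial (Fin 2) A ⧸ T))
      = Module.rank (FractionRing A)
          (⊤ : Submodule (FractionRing A)
            (LocalizedModule (nonZeroDivisors A) (MvPolynomial (Fin 2) A ⧸ T))) := (rank_top _ _).symm
    _ = Module.rank (FractionRing A) (Submodule.span (FractionRing A) (Set.range f)) := by
        rw [htop]
    _ ≤ Cardinal.mk (Set.range f) := rank_span_le _
    _ ≤ Cardinal.mk (Fin s × Fin δ) := Cardinal.mk_range_le
    _ ≤ ((δ * s : ℕ) : Cardinal) := by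
        simp [Cardinal.mk_fintype, Nat.mul_comm]

/-- In the setting of Proposition 5.1
(`R = Q[y₀,z₀]`, `G = Σ gᵢ y₀^i z₀^{(m+1)(s-i)}`, `T = (G, y₀^Δ, z₀^δ)`,
`g_s ≠ 0`, `deg gᵢ = m·i + deg g₀`, `Δ > s`, `δ > (m+1)s`), one has
`deg(R/T) ≤ δ·s`; equivalently `dim_{K(Q)} (R/T) ⊗_Q K(Q) ≤ δ·s`,
which is how the multiplicity is formalized here (the support of `R/T`
over `Q` is everything, so the multiplicity is the generic rank). -/
theorem three_generated_degree_bound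
    {k : Type} [Field k] {ι : Type}
    (s m Δ δ e : ℕ)
    (g : Fin (s + 1) → MvPolynomial ι k)
    (hgs : g (Fin.last s) ≠ 0)
    (hg : ∀ i : Fin (s + 1), (g i).IsHomogeneous (m * i + e))
    (hΔ : s < Δ) (hδ : (m + 1) * s < δ)
    (G : MvPolynomial (Fin 2) (MvPolynomial ι k))
    (hG : G = ∑ i : Fin (s + 1),
      MvPolynomial.C (g i) * (X 0) ^ (i : ℕ) * (X 1) ^ ((m + 1) * (s - (i : ℕ))))
    (T : Ideal (MvPolynomial (Fin 2) (MvPolynomial ι k)))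
    (hT : T = Ideal.span {G, (X 0) ^ Δ, (X 1) ^ δ}) :
    Module.rank (FractionRing (MvPolynomial ι k))
      (LocalizedModule (nonZeroDivisors (MvPolynomial ι k))
        (MvPolynomial (Fin 2) (MvPolynomial ι k) ⧸ T)) ≤ (δ * s : ℕ) := by
  exact aux_main s m Δ δ g hgs G hG T hT
end

section
/- In the setting of Proposition 5.1, if additionally (m+1)(Δ − s + 1) ≥ δ, then deg(R/T) = δ·s exactly; i.e., the monomials y_0^i z_0^j with 0 ≤ i ≤ s−1, 0 ≤ j ≤ δ−1 form a K(Q)-basis of (R/T) ⊗_Q K(Q). -/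
/-!
Write `y = X 0`, `z = X 1` and `K = Frac(Q)`. After inverting the nonzero elements of `Q` the
leading coefficient `g_s` becomes a unit, so `G` is, up to a unit, monic of degree `s` in `y`.
Solving `G = 0` for `y^s` rewrites `y^(s+r)` as a combination of the `y^(r+i) z^((m+1)(s-i))`,
`i < s`, and induction on `r` gives `y^(s+r) ∈ (G, z^((m+1)(r+1)))`. For `r = Δ - s` the
hypothesis `δ ≤ (m+1)(Δ-s+1)` makes the generator `y^Δ` redundant, so
`K[y,z] ⧸ T = B[y] ⧸ (G)` with `B = K[z] ⧸ (z^δ)`. As `G` is monic of degree `s` over `B`,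
this is free over `B` on `1, …, y^(s-1)`, and `B` is free over `K` on `1, …, z^(δ-1)`.
Finally, localizing `Q[y,z] ⧸ T` at the nonzero elements of `Q` is the same as passing to
`K[y,z] ⧸ T`.
-/

open MvPolynomial

noncomputable def yPoly {F : Type*} [CommRing F] {s : ℕ} (u : F) (a : Fin s → F)
    (e : Fin s → ℕ) : MvPolynomial (Fin 2) F :=
  C u * X 0 ^ s + ∑ i : Fin s, C (a i) * X 0 ^ (i : ℕ) * X 1 ^ e i

theorem Ideal.mul_pow_mem_span_pair {R : Type*} [CommSemiring R] {g t x : R} {n : ℕ}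
    (hx : x ∈ Ideal.span {g, t ^ n}) (k : ℕ) : x * t ^ k ∈ Ideal.span {g, t ^ (n + k)} := by
  obtain ⟨c, d, rfl⟩ := Ideal.mem_span_pair.mp hx
  exact Ideal.mem_span_pair.mpr ⟨c * t ^ k, d, by ring⟩

section Reduction

variable {F : Type*} [CommRing F] {s w : ℕ} {u : F}

theorem X_zero_pow_add_mem_span (hu : IsUnit u) (a : Fin s → F) (r : ℕ) :
    (X 0 : MvPolynomial (Fin 2) F) ^ (s + r) ∈
      Ideal.span {yPoly u a (fun i => w * (s - i)), X 1 ^ (w * (r + 1))} := by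
  induction r using Nat.strong_induction_on with
  | _ r ih =>
  have hreduce : C u * X 0 ^ (s + r) = X 0 ^ r * yPoly u a (fun i => w * (s - i)) -
      ∑ i : Fin s, C (a i) * (X 0 ^ (r + i) * X 1 ^ (w * (s - i))) := by
    rw [eq_sub_iff_add_eq, yPoly, mul_add, Finset.mul_sum]
    congr 1
    · ring
    · exact Finset.sum_congr rfl fun _ _ => by ring
  rw [← Ideal.unit_mul_mem_iff_mem _ (hu.map C), hreduce]
  refine sub_mem (Ideal.mul_mem_left _ _ (Ideal.subset_span (by simp)))
    (Ideal.sum_mem _ fun i _ => Ideal.mul_mem_left _ _ ?_)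
  rcases lt_or_ge (r + i) s with hlt | hge
  · have hz : (X 1 : MvPolynomial (Fin 2) F) ^ (w * (r + 1)) ∈
        Ideal.span {yPoly u a (fun i => w * (s - i)), X 1 ^ (w * (r + 1))} :=
      Ideal.subset_span (by simp)
    exact Ideal.mul_mem_left _ _ (Ideal.pow_mem_of_pow_mem _ hz (Nat.mul_le_mul_left w (by omega)))
  · obtain ⟨r', hr'⟩ : ∃ r', r + i = s + r' := ⟨r + i - s, by omega⟩
    have hw : w * (r' + 1) + w * (s - i) = w * (r + 1) := by
      rw [← Nat.mul_add]
      congr 1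
      omega
    rw [hr']
    simpa [hw] using Ideal.mul_pow_mem_span_pair (ih r' (by omega)) (w * (s - i))

theorem span_yPoly_X_zero_pow_X_one_pow {Δ δ : ℕ} (hu : IsUnit u) (a : Fin s → F)
    (hΔ : s ≤ Δ) (hδ : δ ≤ w * (Δ - s + 1)) :
    Ideal.span {yPoly u a (fun i => w * (s - i)), X 0 ^ Δ, X 1 ^ δ} =
      Ideal.span {yPoly u a (fun i => w * (s - i)), X 1 ^ δ} := by
  set G := yPoly u a (fun i => w * (s - i))
  have hz : (X 1 : MvPolynomial (Fin 2) F) ^ (w * (Δ - s + 1)) ∈ Ideal.span {G, X 1 ^ δ} :=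
    Ideal.pow_mem_of_pow_mem _ (Ideal.subset_span (by simp)) hδ
  have hy : (X 0 : MvPolynomial (Fin 2) F) ^ Δ ∈ Ideal.span {G, X 1 ^ δ} := by
    have := X_zero_pow_add_mem_span (w := w) hu a (Δ - s)
    rw [Nat.add_sub_cancel' hΔ] at this
    refine Ideal.span_le.mpr ?_ this
    rintro _ (rfl | rfl)
    · exact Ideal.subset_span (Set.mem_insert _ _)
    · exact hz
  rw [Set.insert_comm, Ideal.span_insert, sup_eq_right, Ideal.span_singleton_le_iff_mem]
  exact hy

end Reduction

theorem span_yPoly_eq_span_yPoly_one {F : Type*} [Field F] {s : ℕ} {u : F} (hu : u ≠ 0)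
    (a : Fin s → F) (e : Fin s → ℕ) (t : MvPolynomial (Fin 2) F) :
    Ideal.span {yPoly u a e, t} = Ideal.span {yPoly 1 (fun i => a i / u) e, t} := by
  have hG : yPoly u a e = C u * yPoly 1 (fun i => a i / u) e := by
    rw [yPoly, yPoly, map_one, one_mul, mul_add, Finset.mul_sum]
    congr 1
    refine Finset.sum_congr rfl fun i _ => ?_
    rw [← mul_assoc, ← mul_assoc, ← C_mul, mul_div_cancel₀ _ hu]
  rw [Ideal.span_insert, Ideal.span_insert, hG,
    Ideal.span_singleton_mul_left_unit (hu.isUnit.map C)]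

section Bivariate

variable (F : Type*) [CommRing F]

noncomputable def polynomialPolynomialEquiv :
    MvPolynomial (Fin 2) F ≃ₐ[F] Polynomial (Polynomial F) :=
  (renameEquiv F (Equiv.swap 0 1)).trans (Polynomial.Bivariate.equivMvPolynomial F).symm

@[simp]
lemma polynomialPolynomialEquiv_X_zero : polynomialPolynomialEquiv F (X 0) = Polynomial.X := by
  simp [polynomialPolynomialEquiv]

@[simp]
lemma polynomialPolynomialEquiv_X_one :
    polynomialPolynomialEquiv F (X 1) = Polynomial.C Polynomial.X := by
  simp [polynomialPolynomialEquiv]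

@[simp]
lemma polynomialPolynomialEquiv_C (c : F) :
    polynomialPolynomialEquiv F (C c) = Polynomial.C (Polynomial.C c) := by
  simp [polynomialPolynomialEquiv]

end Bivariate

noncomputable def AdjoinRoot.basisOfMonic {R : Type*} [CommRing R] {f : Polynomial R}
    (hf : f.Monic) {n : ℕ} (hn : f.natDegree = n) : Module.Basis (Fin n) R (AdjoinRoot f) :=
  (AdjoinRoot.powerBasis' hf).basis.reindex (finCongr hn)

theorem AdjoinRoot.basisOfMonic_apply {R : Type*} [CommRing R] {f : Polynomial R}
    (hf : f.Monic) {n : ℕ} (hn : f.natDegree = n) (i : Fin n) :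
    AdjoinRoot.basisOfMonic hf hn i = AdjoinRoot.root f ^ (i : ℕ) := by
  rw [AdjoinRoot.basisOfMonic, Module.Basis.reindex_apply, PowerBasis.basis_eq_pow]
  rfl

noncomputable def Polynomial.quotientMapCSupSpanEquiv {F R : Type*} [CommRing F] [CommRing R]
    [Algebra F R] (I : Ideal R) (f : Polynomial R) :
    (Polynomial R ⧸ (I.map Polynomial.C ⊔ Ideal.span {f})) ≃ₐ[F]
      AdjoinRoot (f.map (Ideal.Quotient.mk I)) :=
  AlgEquiv.ofRingEquiv
    (f := (DoubleQuot.quotQuotEquivQuotSup _ _).symm.trans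
      ((Ideal.quotEquivOfEq (by rw [Ideal.map_span, Set.image_singleton])).trans
        (AdjoinRoot.Polynomial.quotQuotEquivComm I f).symm))
    fun c => by
      change Ideal.Quotient.mk _ ((Polynomial.C (algebraMap F R c)).map (Ideal.Quotient.mk I)) = _
      rw [Polynomial.map_C]
      rfl

noncomputable def quotientSpanXOnePowEquiv {F : Type*} [CommRing F] (G : MvPolynomial (Fin 2) F)
    (δ : ℕ) : (MvPolynomial (Fin 2) F ⧸ Ideal.span {G, X 1 ^ δ}) ≃ₐ[F]
      AdjoinRoot ((polynomialPolynomialEquiv F G).map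
        (Ideal.Quotient.mk (Ideal.span {Polynomial.X ^ δ}))) :=
  (Ideal.quotientEquivAlg _ _ (polynomialPolynomialEquiv F) (by
    rw [Ideal.map_span, Ideal.map_span, Set.image_singleton, Set.image_pair, Ideal.span_insert,
      sup_comm]
    simp)).trans
    (Polynomial.quotientMapCSupSpanEquiv _ _)

theorem quotientSpanXOnePowEquiv_mk {F : Type*} [CommRing F] (G : MvPolynomial (Fin 2) F)
    (δ : ℕ) (x : MvPolynomial (Fin 2) F) :
    quotientSpanXOnePowEquiv G δ (Ideal.Quotient.mk _ x) = AdjoinRoot.mk _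
      ((polynomialPolynomialEquiv F x).map (Ideal.Quotient.mk (Ideal.span {Polynomial.X ^ δ}))) :=
  rfl

theorem map_polynomialPolynomialEquiv_yPoly_one {F : Type*} [CommRing F] {s : ℕ}
    (a : Fin s → F) (e : Fin s → ℕ) (I : Ideal (Polynomial F)) :
    (polynomialPolynomialEquiv F (yPoly 1 a e)).map (Ideal.Quotient.mk I) =
      Polynomial.X ^ s + ∑ i : Fin s,
        Polynomial.C (Ideal.Quotient.mk I (Polynomial.C (a i) * Polynomial.X ^ e i)) *
          Polynomial.X ^ (i : ℕ) := by
  simp only [yPoly, C_1, one_mul, map_add, map_pow, map_sum, map_mul,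
    polynomialPolynomialEquiv_X_zero, polynomialPolynomialEquiv_X_one,
    polynomialPolynomialEquiv_C, Polynomial.map_add, Polynomial.map_pow, Polynomial.map_X,
    Polynomial.map_sum, Polynomial.map_mul, Polynomial.map_C, add_right_inj]
  exact Finset.sum_congr rfl fun _ _ => by ring

theorem exists_basis_quotient_span_yPoly_one {F : Type*} [CommRing F] [IsDomain F] {s δ : ℕ}
    (hδ : 0 < δ) (a : Fin s → F) (e : Fin s → ℕ) :
    ∃ b : Module.Basis (Fin s × Fin δ) F
      (MvPolynomial (Fin 2) F ⧸ Ideal.span {yPoly 1 a e, X 1 ^ δ}),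
      ∀ p, b p = Ideal.Quotient.mk _ (X 0 ^ (p.1 : ℕ) * X 1 ^ (p.2 : ℕ)) := by
  set I : Ideal (Polynomial F) := Ideal.span {Polynomial.X ^ δ}
  have : Nontrivial (Polynomial F ⧸ I) :=
    AdjoinRoot.nontrivial _ (by rw [Polynomial.degree_X_pow]; exact_mod_cast hδ.ne')
  have hq := map_polynomialPolynomialEquiv_yPoly_one a e I
  set q := (polynomialPolynomialEquiv F (yPoly 1 a e)).map (Ideal.Quotient.mk I)
  have hqm : q.Monic := hq ▸ Polynomial.monic_X_pow_add (Polynomial.degree_sum_fin_lt _)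
  have hqd : q.natDegree = s := by
    rw [hq, Polynomial.natDegree_add_eq_left_of_degree_lt, Polynomial.natDegree_X_pow]
    exact (Polynomial.degree_sum_fin_lt _).trans_eq (Polynomial.degree_X_pow s).symm
  let bz : Module.Basis (Fin δ) F (Polynomial F ⧸ I) :=
    AdjoinRoot.basisOfMonic (Polynomial.monic_X_pow δ) (Polynomial.natDegree_X_pow δ)
  refine ⟨((bz.smulTower (AdjoinRoot.basisOfMonic hqm hqd)).reindex
    (Equiv.prodComm _ _)).map (quotientSpanXOnePowEquiv _ δ).symm.toLinearEquiv, ?_⟩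
  rintro ⟨i, j⟩
  have hbz : bz j = Ideal.Quotient.mk I Polynomial.X ^ (j : ℕ) :=
    AdjoinRoot.basisOfMonic_apply _ _ j
  rw [Module.Basis.map_apply, Module.Basis.reindex_apply, AlgEquiv.toLinearEquiv_apply,
    AlgEquiv.symm_apply_eq, Equiv.prodComm_symm, Equiv.prodComm_apply, Prod.swap_prod_mk,
    Module.Basis.smulTower_apply, AdjoinRoot.basisOfMonic_apply, quotientSpanXOnePowEquiv_mk,
    hbz, Algebra.smul_def, mul_comm]
  simp only [map_mul, map_pow, polynomialPolynomialEquiv_X_zero,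
    polynomialPolynomialEquiv_X_one, Polynomial.map_mul, Polynomial.map_pow, Polynomial.map_X,
    Polynomial.map_C, AdjoinRoot.mk_X, AdjoinRoot.mk_C, AdjoinRoot.algebraMap_eq]
  rfl

theorem Module.Basis.exists_localizedModule {R : Type*} [CommRing R] (S : Submonoid R)
    {M N κ : Type*} [AddCommGroup M] [Module R M] [AddCommGroup N] [Module R N]
    [Module (Localization S) N] [IsScalarTower R (Localization S) N]
    (f : M →ₗ[R] N) [IsLocalizedModule S f]
    (b : Module.Basis κ (Localization S) N) (w : κ → M) (hb : ∀ i, b i = f (w i)) :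
    ∃ b' : Module.Basis κ (Localization S) (LocalizedModule S M),
      ∀ i, b' i = LocalizedModule.mk (w i) 1 := by
  let e := (IsLocalizedModule.iso S f).extendScalarsOfIsLocalization S (Localization S)
  refine ⟨b.map e.symm, fun i => ?_⟩
  rw [Module.Basis.map_apply, hb]
  exact IsLocalizedModule.iso_symm_apply S f (w i)

section Localization

variable {R A A' : Type*} [CommRing R] [CommRing A] [CommRing A'] [Algebra R A] [Algebra A A']
  [Algebra R A'] [IsScalarTower R A A']

instance Ideal.Quotient.isScalarTower_map (T : Ideal A) :
    IsScalarTower R (A ⧸ T) (A' ⧸ T.map (algebraMap A A')) :=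
  IsScalarTower.of_algebraMap_eq fun r => by
    rw [IsScalarTower.algebraMap_apply R A (A ⧸ T), ← IsScalarTower.algebraMap_apply,
      ← IsScalarTower.algebraMap_apply]

theorem isLocalizedModule_quotient_map (S : Submonoid R)
    [IsLocalization (Algebra.algebraMapSubmonoid A S) A'] (T : Ideal A) :
    IsLocalizedModule S
      (IsScalarTower.toAlgHom R (A ⧸ T) (A' ⧸ T.map (algebraMap A A'))).toLinearMap := by
  rw [isLocalizedModule_iff_isLocalization]
  convert (inferInstance : IsLocalization (Algebra.algebraMapSubmonoid (A ⧸ T)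
    (Algebra.algebraMapSubmonoid A S)) (A' ⧸ T.map (algebraMap A A'))) using 1
  exact (Algebra.algebraMapSubmonoid_map_map S).symm

theorem exists_basis_localizedModule_quotient (S : Submonoid R) [Algebra (Localization S) A']
    [IsScalarTower R (Localization S) A'] [IsLocalization (Algebra.algebraMapSubmonoid A S) A']
    {κ : Type*} (T : Ideal A) (w : κ → A)
    (h : ∃ b : Module.Basis κ (Localization S) (A' ⧸ T.map (algebraMap A A')),
      ∀ i, b i = Ideal.Quotient.mk _ (algebraMap A A' (w i))) :
    ∃ b : Module.Basis κ (Localization S) (LocalizedModule S (A ⧸ T)),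
      ∀ i, b i = LocalizedModule.mk (Ideal.Quotient.mk T (w i)) 1 := by
  obtain ⟨b, hb⟩ := h
  have := isLocalizedModule_quotient_map (A' := A') S T
  exact Module.Basis.exists_localizedModule S
    (IsScalarTower.toAlgHom R (A ⧸ T) (A' ⧸ T.map (algebraMap A A'))).toLinearMap b
    (fun i => Ideal.Quotient.mk T (w i)) hb

end Localization

theorem three_generated_degree_exact_general
    {k : Type} [Field k] {ι : Type}
    (s m Δ δ : ℕ)
    (g : Fin (s + 1) → MvPolynomial ι k)
    (hgs : g (Fin.last s) ≠ 0)
    (hΔ : s < Δ) (hδ : (m + 1) * s < δ)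
    (hextra : δ ≤ (m + 1) * (Δ - s + 1))
    (G : MvPolynomial (Fin 2) (MvPolynomial ι k))
    (hG : G = ∑ i : Fin (s + 1),
      MvPolynomial.C (g i) * (X 0) ^ (i : ℕ) * (X 1) ^ ((m + 1) * (s - (i : ℕ))))
    (T : Ideal (MvPolynomial (Fin 2) (MvPolynomial ι k)))
    (hT : T = Ideal.span {G, (X 0) ^ Δ, (X 1) ^ δ}) :
    ∃ b : Module.Basis (Fin s × Fin δ) (FractionRing (MvPolynomial ι k))
      (LocalizedModule (nonZeroDivisors (MvPolynomial ι k))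
        (MvPolynomial (Fin 2) (MvPolynomial ι k) ⧸ T)),
      ∀ p : Fin s × Fin δ,
        b p = LocalizedModule.mk
          (Ideal.Quotient.mk T ((X 0) ^ (p.1 : ℕ) * (X 1) ^ (p.2 : ℕ))) 1 := by
  let K := FractionRing (MvPolynomial ι k)
  let : Algebra (MvPolynomial (Fin 2) (MvPolynomial ι k)) (MvPolynomial (Fin 2) K) :=
    algebraMvPolynomial
  have : IsLocalization (Algebra.algebraMapSubmonoid (MvPolynomial (Fin 2) (MvPolynomial ι k))
      (nonZeroDivisors (MvPolynomial ι k))) (MvPolynomial (Fin 2) K) :=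
    MvPolynomial.isLocalization _ _
  set u := algebraMap (MvPolynomial ι k) K (g (Fin.last s))
  have hu : u ≠ 0 := (map_ne_zero_iff _ (IsFractionRing.injective _ K)).mpr hgs
  refine exists_basis_localizedModule_quotient (A' := MvPolynomial (Fin 2) K) _ T
    (fun p : Fin s × Fin δ => X 0 ^ (p.1 : ℕ) * X 1 ^ (p.2 : ℕ)) ?_
  have hTK : T.map (algebraMap _ (MvPolynomial (Fin 2) K)) = Ideal.span
      {yPoly u (fun i => algebraMap _ K (g i.castSucc)) (fun i => (m + 1) * (s - i)),
        X 0 ^ Δ, X 1 ^ δ} := by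
    rw [hT, hG, Ideal.map_span]
    simp [Set.image_insert_eq, Fin.sum_univ_castSucc, add_comm, yPoly, u]
  rw [hTK, span_yPoly_X_zero_pow_X_one_pow hu.isUnit _ hΔ.le hextra,
    span_yPoly_eq_span_yPoly_one hu]
  simpa using exists_basis_quotient_span_yPoly_one (by omega) _ _

/-- In the setting of Proposition 5.1, if additionally
`(m+1)(Δ−s+1) ≥ δ`, then `deg(R/T) = δ·s` exactly: the monomials
`y₀^i z₀^j` with `0 ≤ i ≤ s−1`, `0 ≤ j ≤ δ−1` form a `K(Q)`-basis of
`(R/T) ⊗_Q K(Q)`. -/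
theorem three_generated_degree_exact
    {k : Type} [Field k] {ι : Type}
    (s m Δ δ e : ℕ)
    (g : Fin (s + 1) → MvPolynomial ι k)
    (hgs : g (Fin.last s) ≠ 0)
    (hg : ∀ i : Fin (s + 1), (g i).IsHomogeneous (m * i + e))
    (hΔ : s < Δ) (hδ : (m + 1) * s < δ)
    (hextra : δ ≤ (m + 1) * (Δ - s + 1))
    (G : MvPolynomial (Fin 2) (MvPolynomial ι k))
    (hG : G = ∑ i : Fin (s + 1),
      MvPolynomial.C (g i) * (X 0) ^ (i : ℕ) * (X 1) ^ ((m + 1) * (s - (i : ℕ))))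
    (T : Ideal (MvPolynomial (Fin 2) (MvPolynomial ι k)))
    (hT : T = Ideal.span {G, (X 0) ^ Δ, (X 1) ^ δ}) :
    ∃ b : Module.Basis (Fin s × Fin δ) (FractionRing (MvPolynomial ι k))
      (LocalizedModule (nonZeroDivisors (MvPolynomial ι k))
        (MvPolynomial (Fin 2) (MvPolynomial ι k) ⧸ T)),
      ∀ p : Fin s × Fin δ,
        b p = LocalizedModule.mk
          (Ideal.Quotient.mk T ((X 0) ^ (p.1 : ℕ) * (X 1) ^ (p.2 : ℕ))) 1 :=
  three_generated_degree_exact_general s m Δ δ g hgs hΔ hδ hextra G hG T hT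
end
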